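/- Let f be an (ℓ,q,S,c)-subharmonic function on C_L(0) ⊂ ℤ^n. Define the 'forbidden' radii set S'' = ∪_{r : S_r ∩ S ≠ ∅} ∪_{j=0}^{cℓ} S_{r+j}, where S_r = {x : ‖x‖ = r}, and the 'regular' radii R = { r ≥ 0 : C_r(0) ⊆ C_L(0) \ S'' }. Then for every r ∈ R with r + ℓ ≤ L, max_{x ∈ C_r(0)} |f(x)| ≤ q · max_{y ∈ C_{r+ℓ}(0)} |f(y)|. -/

import Mathlib

/-!
Every point `x` of a regular cube lies outside `S`, because `S ⊆ S''` once `c ≥ 0`. So the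
interior inequality of subharmonicity applies at `x`, and by the triangle inequality for the
max-norm the whole cube `C_ℓ(x)` lies in `C_{r+ℓ}(0) ⊆ C_L(0)`.
-/

open scoped BigOperators

namespace MPLoc

/-- Max-norm on `ℤ^ι`. -/
def supNorm {ι : Type*} [Fintype ι] (x : ι → ℤ) : ℕ :=
  Finset.univ.sup fun i => (x i).natAbs

/-- The cube `C_L(u) = {x : ‖x - u‖_∞ ≤ L}`. -/
noncomputable def cube {ι : Type*} [Fintype ι] [DecidableEq ι] (u : ι → ℤ) (L : ℕ) :
    Finset (ι → ℤ) :=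
  Finset.Icc (fun i => u i - L) (fun i => u i + L)

/-- A bounded function `f : Λ → ℂ` is `(ℓ, q, S, c)`-subharmonic if for `x ∈ Λ \ S` with
`C_ℓ(x) ⊆ Λ` one has `|f(x)| ≤ q·max_{‖y-x‖=ℓ} |f(y)|`, while for `x ∈ S` one has
`|f(x)| ≤ q·max_{y ∈ Λ, ℓ ≤ ‖y-x‖ ≤ (1+c)ℓ} |f(y)|`.
("`≤ q·max`" is expressed via upper bounds: `|f(x)| ≤ q·B` for every upper bound `B`.) -/
def IsSubharmonic {ι : Type*} [Fintype ι] [DecidableEq ι]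
    (f : (ι → ℤ) → ℂ) (Λ : Set (ι → ℤ)) (ℓ : ℕ) (q : ℝ) (S : Set (ι → ℤ)) (c : ℝ) :
    Prop :=
  (∀ x ∈ Λ \ S, (cube x ℓ : Set (ι → ℤ)) ⊆ Λ →
    ∀ B : ℝ, (∀ y : ι → ℤ, supNorm (y - x) = ℓ → ‖f y‖ ≤ B) →
      ‖f x‖ ≤ q * B) ∧
  (∀ x ∈ S, ∀ B : ℝ,
    (∀ y ∈ Λ, (ℓ : ℝ) ≤ (supNorm (y - x) : ℝ) → (supNorm (y - x) : ℝ) ≤ (1 + c) * ℓ →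
      ‖f y‖ ≤ B) →
    ‖f x‖ ≤ q * B)

/-- The forbidden radii set `S'' = ∪_{r : S_r ∩ S ≠ ∅} ∪_{j=0}^{cℓ} S_{r+j}`, where
`S_r` is the sphere of max-norm radius `r` about the origin. -/
def forbidden {ι : Type*} [Fintype ι]
    (S : Set (ι → ℤ)) (ℓ : ℕ) (c : ℝ) : Set (ι → ℤ) :=
  {x | ∃ z ∈ S, supNorm z ≤ supNorm x ∧ (supNorm x : ℝ) ≤ (supNorm z : ℝ) + c * ℓ}

variable {ι : Type*} [Fintype ι]

lemma supNorm_add_le (a b : ι → ℤ) : supNorm (a + b) ≤ supNorm a + supNorm b :=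
  Finset.sup_le fun i _ => (Int.natAbs_add_le (a i) (b i)).trans <|
    Nat.add_le_add (Finset.le_sup (f := fun j => (a j).natAbs) (Finset.mem_univ i))
      (Finset.le_sup (f := fun j => (b j).natAbs) (Finset.mem_univ i))

lemma subset_forbidden {S : Set (ι → ℤ)} {ℓ : ℕ} {c : ℝ} (hc : 0 ≤ c) :
    S ⊆ forbidden S ℓ c :=
  fun x hx => ⟨x, hx, le_rfl, le_add_of_nonneg_right (by positivity)⟩

variable [DecidableEq ι]

lemma mem_cube_iff {u x : ι → ℤ} {L : ℕ} : x ∈ cube u L ↔ supNorm (x - u) ≤ L := by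
  simp only [cube, Finset.mem_Icc, supNorm, Finset.sup_le_iff, Finset.mem_univ, true_imp_iff,
    Pi.le_def, Pi.sub_apply, ← forall_and]
  exact forall_congr' fun i => by omega

lemma cube_subset_cube {u x : ι → ℤ} {ℓ R : ℕ} (h : supNorm (x - u) + ℓ ≤ R) :
    cube x ℓ ⊆ cube u R := fun y hy => by
  have hyu := supNorm_add_le (y - x) (x - u)
  rw [sub_add_sub_cancel] at hyu
  exact mem_cube_iff.mpr (by linarith [mem_cube_iff.mp hy])

theorem radial_one_step_general (n : ℕ)
    (f : (Fin n → ℤ) → ℂ)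
    (L ℓ : ℕ) (q : ℝ)
    (S : Set (Fin n → ℤ))
    (c : ℝ) (hc : 1 ≤ c)
    (hsub : IsSubharmonic f (cube (0 : Fin n → ℤ) L : Set (Fin n → ℤ)) ℓ q S c)
    (r : ℕ)
    (hreg : (cube (0 : Fin n → ℤ) r : Set (Fin n → ℤ)) ⊆
      (cube (0 : Fin n → ℤ) L : Set (Fin n → ℤ)) \ forbidden S ℓ c)
    (hrL : r + ℓ ≤ L) :
    ∀ B : ℝ, (∀ y ∈ cube (0 : Fin n → ℤ) (r + ℓ), ‖f y‖ ≤ B) →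
      ∀ x ∈ cube (0 : Fin n → ℤ) r, ‖f x‖ ≤ q * B := by
  intro B hB x hx
  obtain ⟨hxL, hxF⟩ := hreg hx
  have hxS : x ∉ S := fun h => hxF (subset_forbidden (by linarith) h)
  have hxr : supNorm (x - 0) + ℓ ≤ r + ℓ := Nat.add_le_add_right (mem_cube_iff.mp hx) ℓ
  refine hsub.1 x ⟨hxL, hxS⟩ ?_ B fun y hy => hB y (cube_subset_cube hxr (mem_cube_iff.mpr hy.le))
  exact_mod_cast cube_subset_cube (hxr.trans hrL)

/-- **One-step radial bound.** If `f` is `(ℓ,q,S,c)`-subharmonic on `C_L(0) ⊂ ℤ^n` and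
`r` is a regular radius, i.e. `C_r(0) ⊆ C_L(0) \ S''`, with `r + ℓ ≤ L`, then
`max_{x ∈ C_r(0)} |f x| ≤ q · max_{y ∈ C_{r+ℓ}(0)} |f y|`. -/
theorem radial_one_step (n : ℕ) (hn : 1 ≤ n)
    (f : (Fin n → ℤ) → ℂ) (M : ℝ) (hbdd : ∀ x, ‖f x‖ ≤ M)
    (L ℓ : ℕ) (hℓ : 0 < ℓ) (q : ℝ) (hq : 0 < q)
    (S : Set (Fin n → ℤ)) (hS : S ⊆ (cube (0 : Fin n → ℤ) L : Set (Fin n → ℤ)))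
    (c : ℝ) (hc : 1 ≤ c)
    (hsub : IsSubharmonic f (cube (0 : Fin n → ℤ) L : Set (Fin n → ℤ)) ℓ q S c)
    (r : ℕ)
    (hreg : (cube (0 : Fin n → ℤ) r : Set (Fin n → ℤ)) ⊆
      (cube (0 : Fin n → ℤ) L : Set (Fin n → ℤ)) \ forbidden S ℓ c)
    (hrL : r + ℓ ≤ L) :
    ∀ B : ℝ, (∀ y ∈ cube (0 : Fin n → ℤ) (r + ℓ), ‖f y‖ ≤ B) →
      ∀ x ∈ cube (0 : Fin n → ℤ) r, ‖f x‖ ≤ q * B :=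
  radial_one_step_general n f L ℓ q S c hc hsub r hreg hrL

end MPLoc
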